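/- arXiv:0912.1819 — 6 statements merged into one kernel-verified Lean document; each statement's English description precedes it below -/
import Mathlib

section
/- Let X and Y be n×n matrices over a field F, L an invertible lower-triangular n×n matrix, and B an invertible upper-triangular n×n matrix, with Y = L·X·B. Then for all 1 ≤ k, ℓ ≤ n, the rank of the upper-left k×ℓ submatrix of X equals the rank of the upper-left k×ℓ submatrix of Y. -/
open Matrix

/-- The upper-left `k × l` corner of a matrix (truncated at the matrix size). -/
def cornerSub {F : Type*} {n m : ℕ} (X : Matrix (Fin n) (Fin m) F) (k l : ℕ) :
    Matrix (Fin (min k n)) (Fin (min l m)) F :=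
  X.submatrix (Fin.castLE (min_le_right k n)) (Fin.castLE (min_le_right l m))

/-- The `(k, l)` entry of the rank-control matrix: the rank of the upper-left
`k × l` submatrix. -/
noncomputable def rcEntry {F : Type*} [Field F] {n m : ℕ}
    (X : Matrix (Fin n) (Fin m) F) (k l : ℕ) : ℕ :=
  (cornerSub X k l).rank

private lemma sum_castLE {M : Type*} [AddCommMonoid M] {k n : ℕ} (h : k ≤ n) (f : Fin n → M)
    (hf : ∀ a : Fin n, k ≤ a.val → f a = 0) :
    ∑ a : Fin n, f a = ∑ a : Fin k, f (Fin.castLE h a) := by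
  classical
  have h2 := Finset.sum_subset
    (Finset.subset_univ ((Finset.univ : Finset (Fin k)).map
      ⟨Fin.castLE h, Fin.castLE_injective h⟩))
    (fun a _ ha => hf a (by
      by_contra hk
      push_neg at hk
      exact ha (Finset.mem_map.mpr ⟨⟨a.val, hk⟩, Finset.mem_univ _, rfl⟩)))
  rw [Finset.sum_map] at h2
  exact h2.symm

private lemma corner_det_isUnit {F : Type*} [Field F] {n k : ℕ} (hk : k ≤ n)
    (L : Matrix (Fin n) (Fin n) F) (hL : ∀ i j : Fin n, i < j → L i j = 0)
    (hLunit : IsUnit L.det) :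
    IsUnit (L.submatrix (Fin.castLE hk) (Fin.castLE hk)).det := by
  have hdet : L.det = ∏ i, L i i :=
    Matrix.det_of_lowerTriangular L (fun i j hij => hL i j hij)
  have hdet' : (L.submatrix (Fin.castLE hk) (Fin.castLE hk)).det
      = ∏ i : Fin k, L (Fin.castLE hk i) (Fin.castLE hk i) := by
    apply Matrix.det_of_lowerTriangular
    intro i j hij
    exact hL _ _ (by simpa using hij)
  rw [hdet] at hLunit
  rw [hdet']
  rw [isUnit_iff_ne_zero, Finset.prod_ne_zero_iff] at hLunit ⊢
  intro i _
  exact hLunit (Fin.castLE hk i) (Finset.mem_univ _)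

theorem stmt0 {F : Type*} [Field F] {n : ℕ}
    (X Y L B : Matrix (Fin n) (Fin n) F)
    (hL : ∀ i j : Fin n, i < j → L i j = 0) (hLunit : IsUnit L.det)
    (hB : ∀ i j : Fin n, j < i → B i j = 0) (hBunit : IsUnit B.det)
    (hY : Y = L * X * B) :
    ∀ k l : ℕ, 1 ≤ k → k ≤ n → 1 ≤ l → l ≤ n →
      rcEntry X k l = rcEntry Y k l := by
  intro k l _ hk _ hl
  have hk' : min k n ≤ n := min_le_right k n
  have hl' : min l n ≤ n := min_le_right l n
  set Lc := L.submatrix (Fin.castLE hk') (Fin.castLE hk') with hLc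
  set Bc := B.submatrix (Fin.castLE hl') (Fin.castLE hl') with hBc
  have key : cornerSub Y k l = Lc * cornerSub X k l * Bc := by
    ext i j
    simp only [cornerSub, hY, Matrix.submatrix_apply, Matrix.mul_apply]
    have h1 : ∀ b : Fin n,
        (∑ a : Fin n, L (Fin.castLE hk' i) a * X a b) * B b (Fin.castLE hl' j)
        = (∑ a : Fin (min k n), L (Fin.castLE hk' i) (Fin.castLE hk' a)
            * X (Fin.castLE hk' a) b) * B b (Fin.castLE hl' j) := by
      intro b
      congr 1
      apply sum_castLE hk'
      intro a ha
      have : (Fin.castLE hk' i : Fin n) < a := by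
        simp only [Fin.lt_def, Fin.coe_castLE]
        exact lt_of_lt_of_le i.isLt ha
      rw [hL _ _ this, zero_mul]
    calc ∑ b : Fin n, (∑ a : Fin n, L (Fin.castLE hk' i) a * X a b) * B b (Fin.castLE hl' j)
        = ∑ b : Fin n, (∑ a : Fin (min k n), L (Fin.castLE hk' i) (Fin.castLE hk' a)
            * X (Fin.castLE hk' a) b) * B b (Fin.castLE hl' j) := by
          exact Finset.sum_congr rfl fun b _ => h1 b
      _ = ∑ b : Fin (min l n), (∑ a : Fin (min k n), L (Fin.castLE hk' i) (Fin.castLE hk' a)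
            * X (Fin.castLE hk' a) (Fin.castLE hl' b)) * B (Fin.castLE hl' b)
            (Fin.castLE hl' j) := by
          apply sum_castLE hl'
          intro b hb
          have : (Fin.castLE hl' j : Fin n) < b := by
            simp only [Fin.lt_def, Fin.coe_castLE]
            exact lt_of_lt_of_le j.isLt hb
          rw [hB _ _ this, mul_zero]
      _ = ∑ b : Fin (min l n), (∑ a : Fin (min k n),
            Lc i a * X (Fin.castLE hk' a) (Fin.castLE hl' b)) * Bc b j := rfl
  have hLcu : IsUnit Lc.det := corner_det_isUnit hk' L hL hLunit
  have hBcu : IsUnit Bc.det := by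
    have := corner_det_isUnit hl' Bᵀ (fun i j hij => hB j i hij)
      (by rwa [Matrix.det_transpose])
    rwa [show (Bᵀ).submatrix (Fin.castLE hl') (Fin.castLE hl') = Bcᵀ from rfl,
      Matrix.det_transpose] at this
  unfold rcEntry
  rw [key, Matrix.rank_mul_eq_left_of_isUnit_det _ _ hBcu,
    Matrix.rank_mul_eq_right_of_isUnit_det _ _ hLcu]
end

section
/- Two n×n partial permutation matrices are equal if and only if their rank-control matrices are equal. -/
open Matrix

/-- A partial permutation matrix: a 0-1 matrix with at most one 1 in each row
and each column. -/
def IsPartialPermMatrix {F : Type*} [Field F] {n : ℕ}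
    (X : Matrix (Fin n) (Fin n) F) : Prop :=
  (∀ i j, X i j = 0 ∨ X i j = 1) ∧
    (∀ i, {j | X i j = 1}.Subsingleton) ∧
    (∀ j, {i | X i j = 1}.Subsingleton)

/-!
The nonzero columns of a partial permutation matrix are distinct standard basis vectors, so its
rank is the number of its entries equal to `1`. Every upper-left corner is again a partial
permutation matrix, hence `R(X)` counts the ones of `X` in the corners `[0, k) × [0, l)`, and by
inclusion–exclusion `X a b = R (a+1) (b+1) - R a (b+1) - R (a+1) b + R a b`.
-/

open Finset

namespace Finset

variable {n m : ℕ}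

lemma card_filter_lt_succ_succ_add (s : Finset (Fin n × Fin m)) (a : Fin n) (b : Fin m) :
    #{p ∈ s | (p.1 : ℕ) < a + 1 ∧ (p.2 : ℕ) < b + 1} + #{p ∈ s | (p.1 : ℕ) < a ∧ (p.2 : ℕ) < b} =
      #{p ∈ s | (p.1 : ℕ) < a ∧ (p.2 : ℕ) < b + 1} + #{p ∈ s | (p.1 : ℕ) < a + 1 ∧ (p.2 : ℕ) < b} +
        if (a, b) ∈ s then 1 else 0 := by
  rw [← sum_ite_eq' s (a, b) fun _ => 1]
  simp only [card_filter, ← sum_add_distrib]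
  refine sum_congr rfl fun p _ => ?_
  have : p = (a, b) ↔ (p.1 : ℕ) = a ∧ (p.2 : ℕ) = b := by simp [Prod.ext_iff, Fin.ext_iff]
  simp only [this]
  split_ifs <;> omega

lemma eq_of_card_filter_lt_eq {s t : Finset (Fin n × Fin m)}
    (h : ∀ k l : ℕ, #{p ∈ s | (p.1 : ℕ) < k ∧ (p.2 : ℕ) < l} =
      #{p ∈ t | (p.1 : ℕ) < k ∧ (p.2 : ℕ) < l}) : s = t := by
  ext ⟨a, b⟩
  have hs := card_filter_lt_succ_succ_add s a b
  have ht := card_filter_lt_succ_succ_add t a b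
  rw [h, h, h, h] at hs
  split_ifs at hs ht <;> simp_all

end Finset

namespace Matrix

variable {F : Type*} [Field F] {m n : Type*}

def IsPartialPerm (X : Matrix m n F) : Prop :=
  (∀ i j, X i j = 0 ∨ X i j = 1) ∧
    (∀ i, {j | X i j = 1}.Subsingleton) ∧
    (∀ j, {i | X i j = 1}.Subsingleton)

open Classical in
noncomputable def onePositions [Fintype m] [Fintype n] (X : Matrix m n F) : Finset (m × n) :=
  {p | X p.1 p.2 = 1}

@[simp]
lemma mem_onePositions [Fintype m] [Fintype n] {X : Matrix m n F} {p : m × n} :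
    p ∈ X.onePositions ↔ X p.1 p.2 = 1 := by
  simp [onePositions]

namespace IsPartialPerm

variable {X : Matrix m n F}

lemma submatrix {m' n' : Type*} (hX : X.IsPartialPerm) {e : m' → m} {f : n' → n}
    (he : e.Injective) (hf : f.Injective) : (X.submatrix e f).IsPartialPerm :=
  ⟨fun i j => hX.1 (e i) (f j), fun i => (hX.2.1 (e i)).preimage hf,
    fun j => (hX.2.2 (f j)).preimage he⟩

lemma ext_of_onePositions [Fintype m] [Fintype n] {Y : Matrix m n F} (hX : X.IsPartialPerm)
    (hY : Y.IsPartialPerm) (h : X.onePositions = Y.onePositions) : X = Y := by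
  ext i j
  have hij : X i j = 1 ↔ Y i j = 1 := by simpa using congrArg ((i, j) ∈ ·) h
  rcases hX.1 i j with hx | hx <;> rcases hY.1 i j with hy | hy <;> simp_all

lemma col_eq_single [DecidableEq m] (hX : X.IsPartialPerm) {i : m} {j : n} (h : X i j = 1) :
    X.col j = Pi.single i 1 := by
  ext i'
  rcases eq_or_ne i' i with rfl | hi'
  · simpa using h
  · simpa [hi'] using (hX.1 i' j).resolve_right fun h' => hi' (hX.2.2 j h' h)

lemma col_eq_zero (hX : X.IsPartialPerm) {j : n} (h : ∀ i, X i j ≠ 1) : X.col j = 0 := by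
  ext i
  simpa using (hX.1 i j).resolve_right (h i)

theorem rank_eq_card_onePositions [Fintype m] [Fintype n] [DecidableEq m]
    (hX : X.IsPartialPerm) : X.rank = #X.onePositions := by
  let b : X.onePositions → m → F := fun p => Pi.single p.1.1 1
  have hb : LinearIndependent F b := by
    convert (Pi.basisFun F m).linearIndependent.comp (fun p : X.onePositions => p.1.1) ?_
    · ext1 p; simp [b]
    rintro ⟨⟨i, j⟩, hp⟩ ⟨⟨i', j'⟩, hq⟩ (rfl : i = i')
    simp only [mem_onePositions] at hp hq
    simp [hX.2.1 i hp hq]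
  have hspan : Submodule.span F (Set.range X.col) = Submodule.span F (Set.range b) := by
    refine le_antisymm (Submodule.span_le.2 ?_) (Submodule.span_le.2 ?_)
    · rintro _ ⟨j, rfl⟩
      by_cases h : ∃ i, X i j = 1
      · obtain ⟨i, hi⟩ := h
        exact Submodule.subset_span
          ⟨⟨(i, j), mem_onePositions.2 hi⟩, (hX.col_eq_single hi).symm⟩
      · push Not at h
        simp [hX.col_eq_zero h]
    · rintro _ ⟨⟨⟨i, j⟩, hp⟩, rfl⟩
      exact Submodule.subset_span ⟨j, hX.col_eq_single (mem_onePositions.1 hp)⟩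
  rw [rank_eq_finrank_span_cols, hspan, finrank_span_eq_card hb, Fintype.card_coe]

lemma rcEntry_eq_card {n m : ℕ} {X : Matrix (Fin n) (Fin m) F} (hX : X.IsPartialPerm)
    (k l : ℕ) : rcEntry X k l = #{p ∈ X.onePositions | (p.1 : ℕ) < k ∧ (p.2 : ℕ) < l} := by
  rw [rcEntry, cornerSub,
    (hX.submatrix (Fin.castLE_injective _) (Fin.castLE_injective _)).rank_eq_card_onePositions]
  refine card_nbij (Prod.map (Fin.castLE (min_le_right k n)) (Fin.castLE (min_le_right l m))) ?_
    ((Fin.castLE_injective _).prodMap (Fin.castLE_injective _)).injOn ?_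
  · rintro ⟨i, j⟩ hp
    simp only [mem_coe, mem_onePositions, submatrix_apply] at hp
    simp only [coe_filter, mem_onePositions, Prod.map_apply, Fin.val_castLE, Set.mem_ofPred]
    exact ⟨hp, by omega, by omega⟩
  · rintro ⟨i, j⟩ hp
    obtain ⟨hp, hik, hjl⟩ : X i j = 1 ∧ (i : ℕ) < k ∧ (j : ℕ) < l := by simpa using hp
    exact ⟨(⟨i, by omega⟩, ⟨j, by omega⟩), by simpa using hp, rfl⟩

end IsPartialPerm

end Matrix

theorem stmt4 {n : ℕ} (π σ : Matrix (Fin n) (Fin n) ℚ)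
    (hπ : IsPartialPermMatrix π) (hσ : IsPartialPermMatrix σ) :
    π = σ ↔ ∀ k l : ℕ, rcEntry π k l = rcEntry σ k l := by
  refine ⟨by rintro rfl _ _; rfl, fun h => IsPartialPerm.ext_of_onePositions hπ hσ ?_⟩
  refine eq_of_card_filter_lt_eq fun k l => ?_
  rw [← IsPartialPerm.rcEntry_eq_card hπ, ← IsPartialPerm.rcEntry_eq_card hσ, h]
end

section
/- Let U be the n×n upper-triangular 0-1 matrix with 1's on and above the main diagonal, and let π be an n×n partial permutation matrix over the rationals (or any field of characteristic zero). Then the rank-control matrix of π equals Uᵗ·π·U, i.e. for all k, ℓ, the rank of the upper-left k×ℓ submatrix of π equals the (k,ℓ) entry of Uᵗ·π·U, which is the number of nonzero entries of π in the upper-left k×ℓ corner. -/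
open Matrix

theorem stmt5 {n : ℕ} (U π : Matrix (Fin n) (Fin n) ℚ)
    (hU : ∀ i j : Fin n, U i j = if i ≤ j then 1 else 0)
    (hπ : IsPartialPermMatrix π) :
    ∀ k l : Fin n,
      (Uᵀ * π * U) k l = (rcEntry π (k + 1) (l + 1) : ℚ) ∧
      (Uᵀ * π * U) k l =
        ((Finset.univ.filter
            (fun p : Fin n × Fin n => p.1 ≤ k ∧ p.2 ≤ l ∧ π p.1 p.2 ≠ 0)).card : ℚ) := by
  obtain ⟨h01, hrow, hcol⟩ := hπ
  intro k l
  set S := Finset.univ.filter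
      (fun p : Fin n × Fin n => p.1 ≤ k ∧ p.2 ≤ l ∧ π p.1 p.2 ≠ 0) with hS
  -- the entry is the sum over the corner
  have hne1 : ∀ i j : Fin n, π i j ≠ 0 → π i j = 1 := by
    intro i j h; rcases h01 i j with h' | h' <;> simp_all
  have hsum : (Uᵀ * π * U) k l = ∑ p ∈ S, π p.1 p.2 := by
    rw [Matrix.mul_apply]
    simp only [Matrix.mul_apply, transpose_apply, hU, Finset.sum_mul]
    rw [Finset.sum_comm, hS, Finset.sum_filter, Fintype.sum_prod_type]
    refine Finset.sum_congr rfl fun i _ => Finset.sum_congr rfl fun j _ => ?_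
    by_cases h1 : i ≤ k <;> by_cases h2 : j ≤ l <;> by_cases h3 : π i j = 0 <;>
      simp [h1, h2, h3]
  have hcard : (Uᵀ * π * U) k l = (S.card : ℚ) := by
    rw [hsum, Finset.card_eq_sum_ones, Nat.cast_sum]
    exact Finset.sum_congr rfl fun p hp => by
      rw [hS, Finset.mem_filter] at hp
      simp [hne1 p.1 p.2 hp.2.2.2]
  refine ⟨?_, hcard⟩
  rw [hcard]
  congr 1
  -- now: S.card = rcEntry π (k+1) (l+1)
  set C := cornerSub π (k + 1 : ℕ) (l + 1 : ℕ) with hC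
  have hCapp : ∀ i j, C i j = π (Fin.castLE (min_le_right _ n) i)
      (Fin.castLE (min_le_right _ n) j) := fun i j => rfl
  -- C * Cᵀ is diagonal
  set d : Fin (min (k + 1 : ℕ) n) → ℚ := fun i => ∑ j, C i j * C i j with hd
  have hdiag : C * Cᵀ = diagonal d := by
    ext i i'
    by_cases h : i = i'
    · subst h; simp [Matrix.mul_apply, hd]
    · rw [Matrix.mul_apply, diagonal_apply_ne _ h]
      apply Finset.sum_eq_zero
      intro j _
      rcases eq_or_ne (C i j) 0 with h0 | h0
      · simp [h0]
      rcases eq_or_ne (C i' j) 0 with h0' | h0'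
      · simp [h0']
      exfalso
      apply h
      have e1 := hne1 _ _ h0
      have e1' := hne1 _ _ h0'
      have := hcol (Fin.castLE (min_le_right _ n) j) e1 e1'
      exact Fin.castLE_injective _ this
  have hrank : C.rank = Fintype.card {i // d i ≠ 0} := by
    rw [← Matrix.rank_self_mul_transpose, hdiag, Matrix.rank_diagonal]
  have hd_ne : ∀ i, d i ≠ 0 ↔ ∃ j, C i j ≠ 0 := by
    intro i
    constructor
    · intro h
      by_contra hc
      push_neg at hc
      exact h (Finset.sum_eq_zero fun j _ => by rw [hc j]; ring)
    · rintro ⟨j, hj⟩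
      have h1 : C i j = 1 := hne1 _ _ hj
      have : (1 : ℚ) ≤ d i := by
        rw [hd]
        calc (1:ℚ) = C i j * C i j := by rw [h1]; ring
        _ ≤ ∑ j', C i j' * C i j' :=
          Finset.single_le_sum (f := fun j' => C i j' * C i j') (fun j' _ => mul_self_nonneg _) (Finset.mem_univ j)
      positivity
  rw [rcEntry, ← hC, hrank]
  rw [Fintype.card_subtype]
  apply Finset.card_bij (fun (p : Fin n × Fin n) (hp : p ∈ S) =>
    (⟨(p.1 : ℕ), lt_min (Nat.lt_succ_of_le ((Finset.mem_filter.mp hp).2.1)) p.1.2⟩ :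
      Fin (min (k + 1 : ℕ) n)))
  · intro p hp
    obtain ⟨-, h1, h2, h3⟩ := Finset.mem_filter.mp hp
    rw [Finset.mem_filter]
    refine ⟨Finset.mem_univ _, ?_⟩
    rw [hd_ne]
    have hm1 : (p.1 : ℕ) < ((k : ℕ) + 1) ⊓ n :=
      lt_min (Nat.lt_succ_of_le (by exact_mod_cast h1)) p.1.2
    have hm2 : (p.2 : ℕ) < ((l : ℕ) + 1) ⊓ n :=
      lt_min (Nat.lt_succ_of_le (by exact_mod_cast h2)) p.2.2
    refine ⟨⟨(p.2 : ℕ), hm2⟩, ?_⟩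
    have heq : C ⟨(p.1 : ℕ), hm1⟩ ⟨(p.2 : ℕ), hm2⟩ = π p.1 p.2 := by
      rw [hCapp]; congr 1 <;> exact Fin.ext rfl
    rw [heq]; exact h3
  · intro p hp q hq hpq
    obtain ⟨-, hp1, hp2, hp3⟩ := Finset.mem_filter.mp hp
    obtain ⟨-, hq1, hq2, hq3⟩ := Finset.mem_filter.mp hq
    simp only [Fin.mk.injEq] at hpq
    have h1 : p.1 = q.1 := Fin.ext hpq
    have h2 : p.2 = q.2 := by
      apply hrow p.1 (hne1 _ _ hp3)
      rw [h1]; exact hne1 _ _ hq3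
    exact Prod.ext h1 h2
  · intro i hi
    rw [Finset.mem_filter] at hi
    obtain ⟨j, hj⟩ := (hd_ne i).mp hi.2
    refine ⟨(Fin.castLE (min_le_right _ n) i, Fin.castLE (min_le_right _ n) j), ?_, ?_⟩
    · rw [hS, Finset.mem_filter]
      refine ⟨Finset.mem_univ _, ?_, ?_, hj⟩
      · exact Fin.mk_le_mk.mpr (Nat.lt_succ_iff.mp (lt_of_lt_of_le i.2 (min_le_left _ _)))
      · exact Fin.mk_le_mk.mpr (Nat.lt_succ_iff.mp (lt_of_lt_of_le j.2 (min_le_left _ _)))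
    · exact Fin.ext rfl
end

section
/- Two complex symmetric n×n matrices S and T lie in the same congruence B-orbit (i.e. T = Bᵗ·S·B for some invertible upper-triangular B) only if they have the same rank-control matrix: rank(S_{kℓ}) = rank(T_{kℓ}) for all k, ℓ. -/
open Matrix

lemma sum_truncate {M : Type*} [AddCommMonoid M] {n k : ℕ} (h : k ≤ n) (f : Fin n → M)
    (hf : ∀ a : Fin n, k ≤ a.val → f a = 0) :
    ∑ a : Fin n, f a = ∑ a : Fin k, f (Fin.castLE h a) := by
  have : ∑ a : Fin k, f (Fin.castLE h a)
      = ∑ a ∈ Finset.univ.map (Fin.castLEEmb h), f a := by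
    rw [Finset.sum_map]; rfl
  rw [this]
  refine (Finset.sum_subset (Finset.subset_univ _) fun x _ hx => ?_).symm
  refine hf x (le_of_not_gt fun hxk => hx ?_)
  simp only [Finset.mem_map, Finset.mem_univ, true_and]
  exact ⟨⟨x.val, hxk⟩, Fin.ext rfl⟩

lemma cornerB_det {n : ℕ} (B : Matrix (Fin n) (Fin n) ℂ) (hBdet : IsUnit B.det)
    (hB : ∀ i j : Fin n, j < i → B i j = 0) (k : ℕ) :
    IsUnit (cornerSub B k k).det := by
  have hdiag : ∀ i : Fin n, B i i ≠ 0 := by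
    have : B.det = ∏ i, B i i := det_of_upperTriangular (fun i j hij => hB i j hij)
    intro i
    rw [this] at hBdet
    exact Finset.prod_ne_zero_iff.1 hBdet.ne_zero i (Finset.mem_univ i)
  have htri : (cornerSub B k k).BlockTriangular id := by
    intro i j hij
    exact hB _ _ (show (Fin.castLE (min_le_right k n) j).val
      < (Fin.castLE (min_le_right k n) i).val from hij)
  rw [det_of_upperTriangular htri]
  simp only [isUnit_iff_ne_zero, Finset.prod_ne_zero_iff]
  intro i _
  exact hdiag _

lemma corner_congr {n : ℕ} (S B : Matrix (Fin n) (Fin n) ℂ)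
    (hB : ∀ i j : Fin n, j < i → B i j = 0) (k l : ℕ) :
    cornerSub (Bᵀ * S * B) k l =
      (cornerSub B k k)ᵀ * cornerSub S k l * cornerSub B l l := by
  ext i j
  simp only [cornerSub, submatrix_apply, mul_apply, transpose_apply]
  set ci : Fin n := Fin.castLE (min_le_right k n) i with hci
  set cj : Fin n := Fin.castLE (min_le_right l n) j with hcj
  have hik : ci.val < min k n := i.isLt
  have hjl : cj.val < min l n := j.isLt
  have h1 : ∀ b : Fin n, (∑ a : Fin n, B a ci * S a b)
      = ∑ a : Fin (min k n), B (Fin.castLE (min_le_right k n) a) ci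
          * S (Fin.castLE (min_le_right k n) a) b := fun b =>
    sum_truncate _ _ fun a ha => by
      rw [hB a ci (show ci.val < a.val from hik.trans_le ha), zero_mul]
  calc ∑ x : Fin n, (∑ a : Fin n, B a ci * S a x) * B x cj
      = ∑ x : Fin n, (∑ a : Fin (min k n), B (Fin.castLE (min_le_right k n) a) ci
          * S (Fin.castLE (min_le_right k n) a) x) * B x cj :=
        Finset.sum_congr rfl fun x _ => by rw [h1]
    _ = _ := sum_truncate _ _ fun x hx => by
        rw [hB x cj (show cj.val < x.val from hjl.trans_le hx), mul_zero]

theorem stmt9 {n : ℕ} (S T : Matrix (Fin n) (Fin n) ℂ) (hS : S.IsSymm)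
    (h : ∃ B : Matrix (Fin n) (Fin n) ℂ,
      IsUnit B.det ∧ (∀ i j : Fin n, j < i → B i j = 0) ∧ T = Bᵀ * S * B) :
    ∀ k l : ℕ, rcEntry S k l = rcEntry T k l := by
  obtain ⟨B, hBdet, hBtri, rfl⟩ := h
  intro k l
  unfold rcEntry
  rw [corner_congr S B hBtri k l, Matrix.mul_assoc,
    Matrix.rank_mul_eq_right_of_isUnit_det _ _ (by
      rw [det_transpose]; exact cornerB_det B hBdet hBtri k),
    Matrix.rank_mul_eq_left_of_isUnit_det _ _ (cornerB_det B hBdet hBtri l)]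
end

section
/- For permutations π, σ in S_n, π ≤ σ in the Bruhat order if and only if for all k, ℓ, the rank of the upper-left k×ℓ submatrix of the permutation matrix of π is greater than or equal to the rank of the upper-left k×ℓ submatrix of the permutation matrix of σ. -/
open Matrix

/-- The permutation matrix of `π`: entry `(i, j)` is `1` iff `π j = i`. -/
def permMatrix {n : ℕ} (π : Equiv.Perm (Fin n)) : Matrix (Fin n) (Fin n) ℚ :=
  Matrix.of fun i j => if π j = i then 1 else 0

/-- The number of inversions of a permutation. -/
def invNum {n : ℕ} (π : Equiv.Perm (Fin n)) : ℕ :=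
  (Finset.univ.filter fun p : Fin n × Fin n => p.1 < p.2 ∧ π p.2 < π p.1).card

/-- The Bruhat (strong) order on `S_n`: `π ≤ σ` iff `σ` can be obtained from `π`
by successively multiplying by transpositions, each step increasing the number
of inversions (equivalently, the Coxeter length). -/
def bruhatLE {n : ℕ} (π σ : Equiv.Perm (Fin n)) : Prop :=
  Relation.ReflTransGen
    (fun a b => (∃ i j : Fin n, i ≠ j ∧ b = a * Equiv.swap i j) ∧ invNum a < invNum b)
    π σ

/-!
The rank of the upper-left `k × l` corner of the permutation matrix of `π` is the number of
dots `(q, π q)` with `q < l` and `π q < k`. If `i < j` and `π i < π j`, passing from `π` to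
`π * swap i j` lowers this count by one on the rectangle `i < l ≤ j`, `π i < k ≤ π j` and leaves
it unchanged elsewhere; such a transposition raises the number of inversions, and one with
`π i > π j` lowers it. This gives the forward direction.

Conversely, suppose the counts of `π ≠ σ` dominate those of `σ`. Let `i` be the first position
where `π` and `σ` differ and `j` the first position after `i` with `π i < π j ≤ σ i`. Then
`π i < σ i`, and on the rectangle of `(i, j)` the counts of `σ` stay strictly below those of `π`,
so `π * swap i j` still dominates `σ` and has more inversions; induction reaches `σ`.
-/

section

open Finset Equiv

variable {n : ℕ}

def cornerCount (π : Perm (Fin n)) (k l : ℕ) : ℕ :=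
  #{q : Fin n | (q : ℕ) < l ∧ (π q : ℕ) < k}

theorem transpose_mul_self_cornerSub_permMatrix (π : Perm (Fin n)) (k l : ℕ) :
    (cornerSub (permMatrix π) k l)ᵀ * cornerSub (permMatrix π) k l =
      diagonal fun j => if (π (Fin.castLE (min_le_right l n) j) : ℕ) < k then 1 else 0 := by
  ext j j'
  simp only [Matrix.mul_apply, cornerSub, permMatrix, transpose_apply, submatrix_apply, of_apply,
    mul_ite, mul_one, mul_zero]
  rcases eq_or_ne j j' with rfl | hjj
  · rw [diagonal_apply_eq]
    split_ifs with hk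
    · rw [Fintype.sum_eq_single ⟨π (Fin.castLE _ j), lt_min hk (Fin.is_lt _)⟩] <;>
        simp [Fin.ext_iff, eq_comm]
    · refine sum_eq_zero fun i _ => if_neg fun h => hk ?_
      rw [h, Fin.val_castLE]
      exact i.2.trans_le (min_le_left k n)
  · rw [diagonal_apply_ne _ hjj]
    refine sum_eq_zero fun i _ => ?_
    split_ifs with h' h
    · exact absurd (Fin.castLE_injective _ (π.injective (h.trans h'.symm))) hjj
    all_goals rfl

theorem rcEntry_permMatrix (π : Perm (Fin n)) (k l : ℕ) :
    rcEntry (permMatrix π) k l = cornerCount π k l := by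
  rw [rcEntry, ← rank_transpose_mul_self, transpose_mul_self_cornerSub_permMatrix, rank_diagonal,
    Fintype.card_subtype, cornerCount]
  simp only [ne_eq, ite_eq_right_iff, one_ne_zero, imp_false, not_not]
  refine card_bij (fun j _ => Fin.castLE (min_le_right l n) j) (fun j hj => ?_) (by simp)
    fun q hq => ?_
  · rw [mem_filter] at hj ⊢
    exact ⟨mem_univ _, j.2.trans_le (min_le_left l n), hj.2⟩
  · rw [mem_filter] at hq
    exact ⟨⟨q, lt_min hq.2.1 q.2⟩, by simpa using hq.2.2, rfl⟩

theorem cornerCount_congr {π σ : Perm (Fin n)} {l : ℕ} (h : ∀ q : Fin n, (q : ℕ) < l → π q = σ q)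
    (k : ℕ) : cornerCount π k l = cornerCount σ k l := by
  unfold cornerCount
  congr 1
  ext q
  simp only [mem_filter, mem_univ, true_and]
  exact and_congr_right fun hq => by rw [h q hq]

theorem cornerCount_succ (π : Perm (Fin n)) (k : ℕ) (q : Fin n) :
    cornerCount π k (q + 1) = cornerCount π k q + if (π q : ℕ) < k then 1 else 0 := by
  have hrest : ∀ r ∈ univ.erase q,
      ((r : ℕ) < q + 1 ∧ (π r : ℕ) < k) ↔ ((r : ℕ) < q ∧ (π r : ℕ) < k) := fun r hr => by
    have := Fin.val_ne_of_ne (ne_of_mem_erase hr)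
    omega
  rw [cornerCount, cornerCount, card_filter, card_filter, ← sum_erase_add _ _ (mem_univ q),
    ← sum_erase_add _ _ (mem_univ q), sum_congr rfl fun r hr => if_congr (hrest r hr) rfl rfl]
  simp

theorem cornerCount_add_card_band (π : Perm (Fin n)) {k K : ℕ} (hkK : k ≤ K) (l : ℕ) :
    cornerCount π k l + #{q : Fin n | (q : ℕ) < l ∧ k ≤ π q ∧ (π q : ℕ) < K} =
      cornerCount π K l := by
  unfold cornerCount
  rw [← card_union_of_disjoint]
  · congr 1
    ext q
    simp only [mem_union, mem_filter, mem_univ, true_and]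
    omega
  · exact disjoint_filter.2 fun q _ h h' => by omega

theorem cornerCount_mul_swap_add {π : Perm (Fin n)} {i j : Fin n} (hij : i < j) (hπ : π i < π j)
    (k l : ℕ) :
    cornerCount (π * swap i j) k l +
        (if (i : ℕ) < l ∧ l ≤ j ∧ (π i : ℕ) < k ∧ k ≤ π j then 1 else 0) =
      cornerCount π k l := by
  have hswap : cornerCount (π * swap i j) k l =
      #{q : Fin n | (swap i j q : ℕ) < l ∧ (π q : ℕ) < k} :=
    card_equiv (swap i j) fun q => by rw [mem_filter, mem_filter]; simp
  have hsplit : ∀ f : Fin n → ℕ, ∑ q, f q = f i + f j + ∑ q ∈ {i, j}ᶜ, f q := fun f => by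
    rw [← sum_add_sum_compl {i, j}, sum_pair hij.ne]
  rw [hswap, cornerCount, card_filter, card_filter, hsplit, hsplit (fun q => ite _ _ _),
    sum_congr rfl fun q hq => by
      simp only [mem_compl, mem_insert, mem_singleton, not_or] at hq
      rw [swap_apply_of_ne_of_ne hq.1 hq.2]]
  simp only [swap_apply_left, swap_apply_right]
  have := Fin.lt_def.1 hij
  have := Fin.lt_def.1 hπ
  split_ifs <;> omega

/-- For `i < j` and `c i < c j`, this injects the inversions of `c` into those of
`c * swap i j` other than `(i, j)`. -/
def transferPair (i j : Fin n) (P : Fin n × Fin n) : Fin n × Fin n :=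
  (if i < P.2 ∧ P.2 < j then P.1 else swap i j P.1,
   if i < P.1 ∧ P.1 < j then P.2 else swap i j P.2)

theorem transferPair_involutive (i j : Fin n) : Function.Involutive (transferPair i j) := by
  rintro ⟨p, q⟩
  simp only [transferPair, swap_apply_def]
  grind

theorem invNum_lt_invNum_mul_swap {c : Perm (Fin n)} {i j : Fin n} (hij : i < j)
    (hc : c i < c j) : invNum c < invNum (c * swap i j) := by
  have hmaps : ∀ P : Fin n × Fin n, P.1 < P.2 → c P.2 < c P.1 →
      (transferPair i j P).1 < (transferPair i j P).2 ∧
        c (swap i j (transferPair i j P).2) < c (swap i j (transferPair i j P).1) ∧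
        transferPair i j P ≠ (i, j) := by
    rintro ⟨p, q⟩ hpq hcpq
    simp only [transferPair, swap_apply_def]
    grind (splits := 40)
  calc invNum c
      ≤ #(({P | P.1 < P.2 ∧ (c * swap i j) P.2 < (c * swap i j) P.1} : Finset _).erase (i, j)) := by
        refine card_le_card_of_injOn _ (fun P hP => ?_)
          (transferPair_involutive i j).injective.injOn
        rw [mem_coe, mem_filter] at hP
        obtain ⟨h1, h2, h3⟩ := hmaps P hP.2.1 hP.2.2
        rw [mem_coe, mem_erase, mem_filter]
        exact ⟨h3, mem_univ _, h1, h2⟩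
    _ < invNum (c * swap i j) := card_erase_lt_of_mem (by rw [mem_filter]; simp [hij, hc])

theorem lt_of_invNum_lt_invNum_mul_swap {c : Perm (Fin n)} {i j : Fin n} (hij : i < j)
    (h : invNum c < invNum (c * swap i j)) : c i < c j := by
  refine lt_of_le_of_ne (not_lt.1 fun hlt => ?_) fun heq => hij.ne (c.injective heq)
  have := invNum_lt_invNum_mul_swap (c := c * swap i j) hij (by simpa using hlt)
  rw [mul_assoc, Equiv.swap_mul_self, mul_one] at this
  exact this.asymm h

theorem invNum_le (π : Perm (Fin n)) : invNum π ≤ n * n := by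
  unfold invNum
  simpa using card_filter_le (univ : Finset (Fin n × Fin n)) _

theorem cornerCount_le_of_bruhat_step {a b : Perm (Fin n)}
    (hstep : (∃ i j : Fin n, i ≠ j ∧ b = a * swap i j) ∧ invNum a < invNum b) (k l : ℕ) :
    cornerCount b k l ≤ cornerCount a k l := by
  obtain ⟨⟨i, j, hne, rfl⟩, hinv⟩ := hstep
  wlog hij : i < j generalizing i j
  · rw [Equiv.swap_comm] at hinv ⊢
    exact this j i hne.symm hinv (lt_of_le_of_ne (not_lt.1 hij) hne.symm)
  exact (Nat.le_add_right _ _).trans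
    (cornerCount_mul_swap_add hij (lt_of_invNum_lt_invNum_mul_swap hij hinv) k l).le

theorem cornerCount_le_of_bruhatLE {π σ : Perm (Fin n)} (h : bruhatLE π σ) (k l : ℕ) :
    cornerCount σ k l ≤ cornerCount π k l := by
  induction h with
  | refl => exact le_rfl
  | tail _ hstep ih => exact (cornerCount_le_of_bruhat_step hstep k l).trans ih

theorem cornerCount_lt_of_band {π σ : Perm (Fin n)} {i : Fin n} {k l : ℕ}
    (hagree : ∀ q : Fin n, q < i → π q = σ q)
    (hband : ∀ q : Fin n, i ≤ q → (q : ℕ) < l → k ≤ π q → π q ≤ σ i → False)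
    (hil : (i : ℕ) < l) (hk : k ≤ σ i)
    (hle : cornerCount σ (σ i + 1) l ≤ cornerCount π (σ i + 1) l) :
    cornerCount σ k l < cornerCount π k l := by
  have hbandπ : #{q : Fin n | (q : ℕ) < l ∧ k ≤ π q ∧ (π q : ℕ) < σ i + 1} =
      #{q : Fin n | (q : ℕ) < i ∧ k ≤ σ q ∧ (σ q : ℕ) < σ i + 1} := by
    congr 1
    ext q
    simp only [mem_filter, mem_univ, true_and]
    constructor
    · rintro ⟨hql, hkq, hqσ⟩
      have hqi : q < i := lt_of_not_ge fun hiq => hband q hiq hql hkq (Nat.lt_succ_iff.1 hqσ)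
      rw [← hagree q hqi]
      exact ⟨hqi, hkq, hqσ⟩
    · rintro ⟨hqi, hkq, hqσ⟩
      rw [hagree q hqi]
      exact ⟨hqi.trans hil, hkq, hqσ⟩
  have hbandσ : #{q : Fin n | (q : ℕ) < i ∧ k ≤ σ q ∧ (σ q : ℕ) < σ i + 1} <
      #{q : Fin n | (q : ℕ) < l ∧ k ≤ σ q ∧ (σ q : ℕ) < σ i + 1} := by
    refine card_lt_card ((ssubset_iff_of_subset fun q hq => ?_).2 ⟨i, ?_, ?_⟩)
    · simp only [mem_filter, mem_univ, true_and] at hq ⊢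
      exact ⟨hq.1.trans hil, hq.2⟩
    · simp only [mem_filter, mem_univ, true_and]
      exact ⟨hil, hk, Nat.lt_succ_self _⟩
    · simp
  have hkK : k ≤ (σ i : ℕ) + 1 := by omega
  have hπ := cornerCount_add_card_band π hkK l
  have hσ := cornerCount_add_card_band σ hkK l
  omega

theorem exists_swap_of_cornerCount_le {π σ : Perm (Fin n)} (hne : π ≠ σ)
    (hle : ∀ k l, cornerCount σ k l ≤ cornerCount π k l) :
    ∃ i j, i < j ∧ π i < π j ∧ ∀ k l, cornerCount σ k l ≤ cornerCount (π * swap i j) k l := by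
  obtain ⟨q, hq⟩ : ∃ q, π q ≠ σ q := by
    by_contra! h
    exact hne (Equiv.ext h)
  obtain ⟨i, hi, hmin⟩ := WellFounded.has_min wellFounded_lt {q | π q ≠ σ q} ⟨q, hq⟩
  have hagree : ∀ q, q < i → π q = σ q := fun q hq => by_contra fun h => hmin q h hq
  have hπσ : π i < σ i := by
    refine lt_of_le_of_ne ?_ hi
    have h := hle (σ i + 1) (i + 1)
    rw [cornerCount_succ, cornerCount_succ, cornerCount_congr hagree,
      if_pos (Nat.lt_succ_self _)] at h
    by_contra hlt
    rw [if_neg (by simpa [Nat.lt_succ_iff] using hlt)] at h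
    omega
  obtain ⟨j, ⟨hij, hπij, hjσ⟩, hjmin⟩ :=
    WellFounded.has_min wellFounded_lt {q | i < q ∧ π i < π q ∧ π q ≤ σ i} <| by
      refine ⟨π.symm (σ i), lt_of_le_of_ne (not_lt.1 fun hlt => ?_) fun heq => hi ?_,
        by simpa using hπσ, by simp⟩
      · exact hlt.ne (σ.injective ((hagree _ hlt).symm.trans (π.apply_symm_apply _)))
      · exact (congrArg π heq).trans (π.apply_symm_apply _)
  refine ⟨i, j, hij, hπij, fun k l => ?_⟩
  have hswap := cornerCount_mul_swap_add hij hπij k l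
  split_ifs at hswap with hR
  · obtain ⟨hil, hlj, hik, hkj⟩ := hR
    have := cornerCount_lt_of_band hagree (fun q hiq hql hkq hqσ => ?_) hil (hkj.trans hjσ)
      (hle _ _)
    · omega
    have hqi : i < q := lt_of_le_of_ne hiq (by rintro rfl; omega)
    exact hjmin q ⟨hqi, Fin.lt_def.2 (by omega), hqσ⟩ (Fin.lt_def.2 (by omega))
  · have := hle k l
    omega

theorem bruhatLE_of_cornerCount_le {π σ : Perm (Fin n)}
    (h : ∀ k l, cornerCount σ k l ≤ cornerCount π k l) : bruhatLE π σ := by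
  by_cases hne : π = σ
  · exact hne ▸ .refl
  obtain ⟨i, j, hij, hπ, h'⟩ := exists_swap_of_cornerCount_le hne h
  have hinv := invNum_lt_invNum_mul_swap hij hπ
  exact .head ⟨⟨i, j, hij.ne, rfl⟩, hinv⟩ (bruhatLE_of_cornerCount_le h')
termination_by n * n - invNum π
decreasing_by have := invNum_le (π * swap i j); omega

end

theorem stmt10 {n : ℕ} (π σ : Equiv.Perm (Fin n)) :
    bruhatLE π σ ↔
      ∀ k l : ℕ, rcEntry (permMatrix σ) k l ≤ rcEntry (permMatrix π) k l := by
  simp only [rcEntry_permMatrix]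
  exact ⟨cornerCount_le_of_bruhatLE, bruhatLE_of_cornerCount_le⟩
end

section
/- Let X be an n×n matrix over an infinite field and fix k, ℓ, c; if the upper-left k×ℓ submatrix X_{kℓ} of X satisfies rank(X_{kℓ}) ≤ c and Y = Lᵗ·X·B with L, B invertible upper-triangular n×n matrices, then the upper-left k×ℓ submatrix Y_{kℓ} of Y satisfies rank(Y_{kℓ}) ≤ c. -/
open Matrix

lemma sum_restrict {F : Type*} [AddCommMonoid F] {n m : ℕ} (h : m ≤ n)
    (f : Fin n → F) (hf : ∀ p : Fin n, m ≤ p.val → f p = 0) :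
    ∑ p, f p = ∑ p : Fin m, f (Fin.castLE h p) := by
  classical
  have : ∑ p : Fin m, f (Fin.castLE h p) = ∑ p ∈ Finset.univ.map (Fin.castLEEmb h), f p :=
    (Finset.sum_map Finset.univ (Fin.castLEEmb h) f).symm
  rw [this]
  refine (Finset.sum_subset (Finset.subset_univ _) ?_).symm
  intro x _ hx
  refine hf x ?_
  by_contra hlt
  push_neg at hlt
  exact hx (Finset.mem_map.2 ⟨⟨x.val, hlt⟩, Finset.mem_univ _, by
    simp [Fin.castLEEmb, Fin.castLE]⟩)

theorem stmt19 {F : Type*} [Field F] [Infinite F] {n : ℕ}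
    (X Y L B : Matrix (Fin n) (Fin n) F)
    (hL : ∀ i j : Fin n, j < i → L i j = 0) (hLunit : IsUnit L.det)
    (hB : ∀ i j : Fin n, j < i → B i j = 0) (hBunit : IsUnit B.det)
    (hY : Y = Lᵀ * X * B)
    (k l c : ℕ) (hrk : rcEntry X k l ≤ c) :
    rcEntry Y k l ≤ c := by
  set L' : Matrix (Fin (min k n)) (Fin (min k n)) F :=
    L.submatrix (Fin.castLE (min_le_right k n)) (Fin.castLE (min_le_right k n)) with hL'
  set B' : Matrix (Fin (min l n)) (Fin (min l n)) F :=
    B.submatrix (Fin.castLE (min_le_right l n)) (Fin.castLE (min_le_right l n)) with hB'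
  have key : cornerSub Y k l = L'ᵀ * cornerSub X k l * B' := by
    subst hY
    ext i j
    have hi : ((Fin.castLE (min_le_right k n) i : Fin n)).val < min k n := i.isLt
    have hj : ((Fin.castLE (min_le_right l n) j : Fin n)).val < min l n := j.isLt
    simp only [cornerSub, submatrix_apply, mul_apply, transpose_apply, hL', hB']
    rw [sum_restrict (min_le_right l n)
      (f := fun q => (∑ p, L p (Fin.castLE (min_le_right k n) i) * X p q)
          * B q (Fin.castLE (min_le_right l n) j))]
    · refine Finset.sum_congr rfl fun q _ => ?_
      congr 1
      refine sum_restrict (min_le_right k n) _ fun p hp => ?_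
      have hpi : (Fin.castLE (min_le_right k n) i : Fin n) < p :=
        Fin.lt_def.2 (lt_of_lt_of_le hi hp)
      rw [hL p _ hpi, zero_mul]
    · intro q hq
      have hjq : (Fin.castLE (min_le_right l n) j : Fin n) < q :=
        Fin.lt_def.2 (lt_of_lt_of_le hj hq)
      rw [hB q _ hjq, mul_zero]
  unfold rcEntry at *
  rw [key]
  calc (L'ᵀ * cornerSub X k l * B').rank ≤ (L'ᵀ * cornerSub X k l).rank :=
        rank_mul_le_left _ _
    _ ≤ (cornerSub X k l).rank := rank_mul_le_right _ _
    _ ≤ c := hrk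
end
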